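/- arXiv:1809.01750 — 5 statements merged into one kernel-verified Lean document; each statement's English description precedes it below -/
import Mathlib

section
/- Let f : ℤ² → {contact elements} be a discrete channel surface with circular direction '+'. Then the horizontal curvature sphere congruence is constant along the '+'-coordinate lines: s⁺(m,n) = s⁺(m',n) for all m, m', n ∈ ℤ. (One of the curvature sphere congruences of a discrete channel surface is constant along its coordinate lines; discrete version of the property that one principal curvature is constant along its curvature direction.) -/
noncomputable section

/-- The Lie sphere geometric model: `ℝ^{4,2}`. -/
abbrev V6 : Type := Fin 6 → ℝ

/-- The symmetric bilinear form of signature `(4,2)` on `V6`. -/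
def B (x y : V6) : ℝ :=
  x 0 * y 0 + x 1 * y 1 + x 2 * y 2 + x 3 * y 3 - x 4 * y 4 - x 5 * y 5

/-- An oriented sphere: a 1-dimensional isotropic subspace. -/
def IsSphere (S : Submodule ℝ V6) : Prop :=
  Module.finrank ℝ S = 1 ∧ ∀ x ∈ S, B x x = 0

/-- A contact element: a 2-dimensional totally isotropic subspace. -/
def IsContact (W : Submodule ℝ V6) : Prop :=
  Module.finrank ℝ W = 2 ∧ ∀ x ∈ W, ∀ y ∈ W, B x y = 0

/-- A `(2,1)`-plane: 3-dim subspace on which the form is nondegenerate of signature `(2,1)`. -/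
def IsSig21 (D : Submodule ℝ V6) : Prop :=
  ∃ u v w : V6, D = Submodule.span ℝ {u, v, w} ∧
    B u u = 1 ∧ B v v = 1 ∧ B w w = -1 ∧ B u v = 0 ∧ B u w = 0 ∧ B v w = 0

/-- A Dupin cyclide: a pair of `(2,1)`-planes, the second the orthogonal complement of the first. -/
def IsDupin (D E : Submodule ℝ V6) : Prop :=
  IsSig21 D ∧ IsSig21 E ∧ ∀ x : V6, x ∈ E ↔ ∀ y ∈ D, B x y = 0

/-- Horizontal curvature sphere on the edge from `(m,n)` to `(m+1,n)`. -/
def sPlus (f : ℤ × ℤ → Submodule ℝ V6) (m n : ℤ) : Submodule ℝ V6 :=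
  f (m, n) ⊓ f (m + 1, n)

/-- Vertical curvature sphere on the edge from `(m,n)` to `(m,n+1)`. -/
def sMinus (f : ℤ × ℤ → Submodule ℝ V6) (m n : ℤ) : Submodule ℝ V6 :=
  f (m, n) ⊓ f (m, n + 1)

/-- A discrete Legendre map. -/
def IsLegendre (f : ℤ × ℤ → Submodule ℝ V6) : Prop :=
  (∀ p : ℤ × ℤ, IsContact (f p)) ∧
  (∀ m n : ℤ, Module.finrank ℝ (sPlus f m n) = 1) ∧
  (∀ m n : ℤ, Module.finrank ℝ (sMinus f m n) = 1)

/-- A face-cyclide congruence for `f`. -/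
def IsFaceCyclideCongruence (f D E : ℤ × ℤ → Submodule ℝ V6) : Prop :=
  ∀ m n : ℤ,
    IsDupin (D (m, n)) (E (m, n)) ∧
    sPlus f m n ≤ D (m, n) ∧ sPlus f m (n + 1) ≤ D (m, n) ∧
    sMinus f m n ≤ E (m, n) ∧ sMinus f (m + 1) n ≤ E (m, n)

/-- A discrete channel surface with circular direction `+`. -/
def IsChannelPlus (f : ℤ × ℤ → Submodule ℝ V6) : Prop :=
  IsLegendre f ∧
  ∃ D E : ℤ × ℤ → Submodule ℝ V6,
    IsFaceCyclideCongruence f D E ∧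
    ∀ m m' n : ℤ, D (m, n) = D (m', n) ∧ E (m, n) = E (m', n)

/-- The orthogonal complement of a point sphere complex `p`. -/
def pPerp (p : V6) : Submodule ℝ V6 where
  carrier := {x | B x p = 0}
  add_mem' := by
    intro a b ha hb
    simp only [Set.mem_setOf_eq, B, Pi.add_apply] at *
    linear_combination ha + hb
  zero_mem' := by simp [B]
  smul_mem' := by
    intro c x hx
    simp only [Set.mem_setOf_eq, B, Pi.smul_apply, smul_eq_mul] at *
    linear_combination c * hx

lemma B_expand (a b c a' b' c' : ℝ) (u v w : V6) :
    B (a • u + b • v + c • w) (a' • u + b' • v + c' • w) =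
      a * a' * B u u + b * b' * B v v + c * c' * B w w +
      (a * b' + a' * b) * B u v + (a * c' + a' * c) * B u w +
      (b * c' + b' * c) * B v w := by
  simp only [B, Pi.add_apply, Pi.smul_apply, smul_eq_mul]
  ring

lemma scalar_lemma (a b c a' b' c' : ℝ)
    (h1 : a^2 + b^2 - c^2 = 0) (h2 : a'^2 + b'^2 - c'^2 = 0)
    (h3 : a*a' + b*b' - c*c' = 0) :
    (a = 0 ∧ b = 0 ∧ c = 0) ∨ ∃ t : ℝ, a' = t*a ∧ b' = t*b ∧ c' = t*c := by
  have hab : a*b' - a'*b = 0 := by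
    have hsq : (a*b' - a'*b)^2 = 0 := by
      linear_combination (a'^2 + b'^2) * h1 + c^2 * h2 - (a*a' + b*b' + c*c') * h3
    exact pow_eq_zero_iff (n := 2) (by norm_num) |>.mp hsq
  by_cases ha : a = 0
  · by_cases hb : b = 0
    · left
      refine ⟨ha, hb, ?_⟩
      have : c^2 = 0 := by rw [ha, hb] at h1; linarith
      exact pow_eq_zero_iff (n := 2) (by norm_num) |>.mp this
    · right
      have ha' : a' = 0 := by
        have : a' * b = 0 := by rw [ha] at hab; linarith
        rcases mul_eq_zero.mp this with h | h
        · exact h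
        · exact absurd h hb
      have hc2 : c^2 = b^2 := by rw [ha] at h1; linarith
      have hc : c ≠ 0 := by
        intro h0
        rw [h0] at hc2
        exact hb (pow_eq_zero_iff (n := 2) (by norm_num) |>.mp (by linarith))
      refine ⟨b'/b, by rw [ha, ha']; ring, by field_simp, ?_⟩
      have hbb : b * b' = c * c' := by rw [ha, ha'] at h3; linarith
      field_simp
      -- goal : c' * b = b' * c  (possibly)
      nlinarith [sq_nonneg (c - b), sq_nonneg (c + b), hc2, hbb]
  · right
    have hc : c ≠ 0 := by
      intro h0
      rw [h0] at h1
      have : a^2 = 0 := by nlinarith [sq_nonneg a, sq_nonneg b]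
      exact ha (pow_eq_zero_iff (n := 2) (by norm_num) |>.mp this)
    refine ⟨a'/a, by field_simp, ?_, ?_⟩
    · field_simp
      linarith [hab]
    · have hb'' : b' * a = a' * b := by linarith [hab]
      have key : a' * c^2 = a * c * c' := by
        linear_combination (-a') * h1 + a * h3 - b * hb''
      have h4 : c * (c' * a) = c * (a' * c) := by linear_combination -key
      have h5 := mul_left_cancel₀ hc h4
      field_simp
      linarith [h5]

/-- Extract coefficients from membership in the span of three vectors. -/
lemma mem_span_triple {u v w x : V6} (hx : x ∈ Submodule.span ℝ ({u, v, w} : Set V6)) :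
    ∃ a b c : ℝ, x = a • u + b • v + c • w := by
  rw [show ({u, v, w} : Set V6) = insert u (insert v {w}) from rfl,
    Submodule.mem_span_insert] at hx
  obtain ⟨a, z, hz, hxz⟩ := hx
  rw [Submodule.mem_span_insert] at hz
  obtain ⟨b, z', hz', hzz⟩ := hz
  rw [Submodule.mem_span_singleton] at hz'
  obtain ⟨c, hc⟩ := hz'
  exact ⟨a, b, c, by rw [hxz, hzz, ← hc, add_assoc]⟩

/-- A 1-dimensional subspace has a nonzero generator. -/
lemma exists_gen {S : Submodule ℝ V6} (h : Module.finrank ℝ S = 1) :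
    ∃ x : V6, x ≠ 0 ∧ S = Submodule.span ℝ ({x} : Set V6) := by
  have hbot : S ≠ ⊥ := by
    intro h0
    rw [h0, finrank_bot] at h
    exact one_ne_zero h.symm
  obtain ⟨x, hxS, hx0⟩ := (Submodule.ne_bot_iff S).mp hbot
  refine ⟨x, hx0, ?_⟩
  have hle : Submodule.span ℝ ({x} : Set V6) ≤ S := by
    rw [Submodule.span_le, Set.singleton_subset_iff]; exact hxS
  have hfr := finrank_span_singleton (K := ℝ) hx0
  exact (Submodule.eq_of_le_of_finrank_le hle (by rw [h, hfr])).symm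

/-- Key geometric lemma: two isotropic, mutually orthogonal nonzero vectors inside a
`(2,1)`-plane are proportional. -/
lemma isotropic_orthogonal_in_sig21 {D : Submodule ℝ V6} (hD : IsSig21 D)
    {x y : V6} (hx : x ∈ D) (hy : y ∈ D)
    (hxx : B x x = 0) (hyy : B y y = 0) (hxy : B x y = 0) (hx0 : x ≠ 0) :
    ∃ t : ℝ, y = t • x := by
  obtain ⟨u, v, w, hDspan, huu, hvv, hww, huv, huw, hvw⟩ := hD
  rw [hDspan] at hx hy
  obtain ⟨a, b, c, hxabc⟩ := mem_span_triple hx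
  obtain ⟨a', b', c', hyabc⟩ := mem_span_triple hy
  have e1 : a^2 + b^2 - c^2 = 0 := by
    have := B_expand a b c a b c u v w
    rw [← hxabc, hxx, huu, hvv, hww, huv, huw, hvw] at this
    nlinarith [this]
  have e2 : a'^2 + b'^2 - c'^2 = 0 := by
    have := B_expand a' b' c' a' b' c' u v w
    rw [← hyabc, hyy, huu, hvv, hww, huv, huw, hvw] at this
    nlinarith [this]
  have e3 : a*a' + b*b' - c*c' = 0 := by
    have := B_expand a b c a' b' c' u v w
    rw [← hxabc, ← hyabc, hxy, huu, hvv, hww, huv, huw, hvw] at this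
    nlinarith [this]
  rcases scalar_lemma a b c a' b' c' e1 e2 e3 with ⟨h1, h2, h3⟩ | ⟨t, h1, h2, h3⟩
  · exact absurd (by rw [hxabc, h1, h2, h3]; simp) hx0
  · exact ⟨t, by rw [hyabc, hxabc, h1, h2, h3]; module⟩

lemma step_lemma (f : ℤ × ℤ → Submodule ℝ V6) (hf : IsChannelPlus f) (m n : ℤ) :
    sPlus f m n = sPlus f (m + 1) n := by
  obtain ⟨⟨hC, hrP, _⟩, D, E, hFC, hConst⟩ := hf
  set L1 := sPlus f m n with hL1
  set L2 := sPlus f (m + 1) n with hL2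
  -- both curvature spheres lie in the contact element f (m+1, n)
  have hL1f : L1 ≤ f (m + 1, n) := inf_le_right
  have hL2f : L2 ≤ f (m + 1, n) := inf_le_left
  -- both lie in the common cyclide plane D (m, n)
  have hL1D : L1 ≤ D (m, n) := (hFC m n).2.1
  have hL2D : L2 ≤ D (m, n) := by
    have h := (hFC (m + 1) n).2.1
    rwa [(hConst (m + 1) m n).1] at h
  -- generators
  obtain ⟨x, hx0, hx⟩ := exists_gen (hrP m n)
  obtain ⟨y, hy0, hy⟩ := exists_gen (hrP (m + 1) n)
  rw [← hL1, ← hL2] at *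
  have hxL1 : x ∈ L1 := by
    rw [hx]; exact Submodule.mem_span_singleton_self x
  have hyL2 : y ∈ L2 := by
    rw [hy]; exact Submodule.mem_span_singleton_self y
  have hxf : x ∈ f (m + 1, n) := hL1f hxL1
  have hyf : y ∈ f (m + 1, n) := hL2f hyL2
  have hcont := hC (m + 1, n)
  have hxx : B x x = 0 := hcont.2 x hxf x hxf
  have hyy : B y y = 0 := hcont.2 y hyf y hyf
  have hxy : B x y = 0 := hcont.2 x hxf y hyf
  have hDsig : IsSig21 (D (m, n)) := (hFC m n).1.1
  obtain ⟨t, ht⟩ := isotropic_orthogonal_in_sig21 hDsig (hL1D hxL1) (hL2D hyL2)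
    hxx hyy hxy hx0
  -- hence the lines coincide
  have hyL1 : y ∈ L1 := by
    rw [ht]; exact Submodule.smul_mem _ t hxL1
  have hle : L2 ≤ L1 := by
    rw [hy, Submodule.span_le, Set.singleton_subset_iff]; exact hyL1
  exact (Submodule.eq_of_le_of_finrank_le hle
    (by rw [hrP m n, hrP (m + 1) n])).symm

/-- The horizontal curvature sphere congruence of a discrete channel
surface with circular direction `+` is constant along the `+`-coordinate lines. -/
theorem curvature_spheres_constant_along_circular_direction
    (f : ℤ × ℤ → Submodule ℝ V6) (hf : IsChannelPlus f) :
    ∀ m m' n : ℤ, sPlus f m n = sPlus f m' n := by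
  have aux : ∀ m n : ℤ, sPlus f m n = sPlus f 0 n := by
    intro m n
    induction m using Int.induction_on with
    | zero => rfl
    | succ k ih => rw [← step_lemma f hf (k : ℤ) n]; exact ih
    | pred k ih =>
        have h := step_lemma f hf (-(k : ℤ) - 1) n
        rw [show (-(k : ℤ) - 1) + 1 = -(k : ℤ) by ring] at h
        rw [h]; exact ih
  intro m m' n
  rw [aux m n, aux m' n]
end
end

section
/- Let f : ℤ² → {contact elements} be a discrete channel surface with circular direction '+'. Then f envelopes a one-parameter family of spheres: there exists a map s from ℤ to oriented spheres such that s(n) ⊆ f(m,n) for every m, n ∈ ℤ. -/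
noncomputable section

/-!
The horizontal curvature spheres `s⁺(m,n)` and `s⁺(m+1,n)` both lie in the contact element
`f(m+1,n)` and, since the Lie cyclide congruence does not depend on `m`, in the same
`(2,1)`-plane `D⁺(n)`. A `(2,1)`-plane contains no two linearly independent orthogonal isotropic
vectors (in `ℝ^{2,1}` the orthogonal complement of a null vector meets the light cone only in
its own line), so `s⁺(m,n) = s⁺(m+1,n)`. Hence `s⁺(·,n)` is one sphere `s(n)`, contained in every `f(m,n)`.
-/

lemma B_comm (x y : V6) : B x y = B y x := by
  simp only [B]; ring

lemma B_smul_add_smul_add_smul {u v w : V6} (huu : B u u = 1) (hvv : B v v = 1)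
    (hww : B w w = -1) (huv : B u v = 0) (huw : B u w = 0) (hvw : B v w = 0)
    (a b c a' b' c' : ℝ) :
    B (a • u + b • v + c • w) (a' • u + b' • v + c' • w) = a * a' + b * b' - c * c' := by
  have expand : B (a • u + b • v + c • w) (a' • u + b' • v + c' • w) =
      a * a' * B u u + a * b' * B u v + a * c' * B u w +
      b * a' * B v u + b * b' * B v v + b * c' * B v w +
      c * a' * B w u + c * b' * B w v + c * c' * B w w := by
    simp only [B, Pi.add_apply, Pi.smul_apply, smul_eq_mul]
    ring
  rw [expand, B_comm v u, B_comm w u, B_comm w v, huu, hvv, hww, huv, huw, hvw]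
  ring

/-- Two orthogonal null vectors of `ℝ^{2,1}` are proportional. -/
lemma exists_proportional_of_null_of_orthogonal {a b c a' b' c' : ℝ}
    (h : a * a + b * b = c * c) (h' : a' * a' + b' * b' = c' * c')
    (horth : a * a' + b * b' = c * c') (hne : ¬(a' = 0 ∧ b' = 0 ∧ c' = 0)) :
    ∃ t : ℝ, a = t * a' ∧ b = t * b' ∧ c = t * c' := by
  have hspace : a' * a' + b' * b' ≠ 0 := by
    intro h0
    have ha' : a' = 0 := by nlinarith
    have hb' : b' = 0 := by nlinarith
    have hc' : c' = 0 := by nlinarith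
    exact hne ⟨ha', hb', hc'⟩
  -- equality in Cauchy–Schwarz for the spatial parts
  have hcross : a * b' - b * a' = 0 := by
    have : (a * b' - b * a') ^ 2 = 0 := by
      linear_combination (a' * a' + b' * b') * h + c * c * h' - (a * a' + b * b' + c * c') * horth
    exact pow_eq_zero_iff two_ne_zero |>.mp this
  refine ⟨(a * a' + b * b') / (a' * a' + b' * b'), ?_, ?_, ?_⟩ <;>
    rw [div_mul_eq_mul_div, eq_div_iff hspace]
  · linear_combination b' * hcross
  · linear_combination -a' * hcross
  · linear_combination c * h' - c' * horth

lemma IsSig21.mem_span_singleton_of_isotropic {D : Submodule ℝ V6} (hD : IsSig21 D)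
    {x y : V6} (hx : x ∈ D) (hy : y ∈ D) (hxx : B x x = 0) (hyy : B y y = 0)
    (hxy : B x y = 0) (hy0 : y ≠ 0) : x ∈ ℝ ∙ y := by
  obtain ⟨u, v, w, rfl, huu, hvv, hww, huv, huw, hvw⟩ := hD
  obtain ⟨a, b, c, rfl⟩ := Submodule.mem_span_triple.mp hx
  obtain ⟨a', b', c', rfl⟩ := Submodule.mem_span_triple.mp hy
  have hB := B_smul_add_smul_add_smul huu hvv hww huv huw hvw
  rw [hB] at hxx hyy hxy
  obtain ⟨t, rfl, rfl, rfl⟩ := exists_proportional_of_null_of_orthogonal (sub_eq_zero.mp hxx)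
    (sub_eq_zero.mp hyy) (sub_eq_zero.mp hxy) (by rintro ⟨rfl, rfl, rfl⟩; simp at hy0)
  exact Submodule.mem_span_singleton.mpr ⟨t, by simp only [smul_add, smul_smul]⟩

lemma IsSig21.eq_of_le_isotropic {D W S T : Submodule ℝ V6} (hD : IsSig21 D)
    (hW : ∀ x ∈ W, ∀ y ∈ W, B x y = 0) (hS : Module.finrank ℝ S = 1)
    (hT : Module.finrank ℝ T = 1) (hSD : S ≤ D) (hTD : T ≤ D) (hSW : S ≤ W) (hTW : T ≤ W) :
    S = T := by
  obtain ⟨⟨y, hyT⟩, hne⟩ := Module.finrank_pos_iff_exists_ne_zero.mp (hT ▸ one_pos)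
  have hy0 : y ≠ 0 := fun h => hne (Subtype.ext h)
  have hST : S ≤ T := fun x hx =>
    (Submodule.span_singleton_le_iff_mem y T).mpr hyT <|
      hD.mem_span_singleton_of_isotropic (hSD hx) (hTD hyT) (hW x (hSW hx) x (hSW hx))
        (hW y (hTW hyT) y (hTW hyT)) (hW x (hSW hx) y (hTW hyT)) hy0
  exact Submodule.eq_of_le_of_finrank_eq hST (hS.trans hT.symm)

namespace IsChannelPlus

variable {f : ℤ × ℤ → Submodule ℝ V6}

lemma sPlus_succ (hf : IsChannelPlus f) (m n : ℤ) : sPlus f (m + 1) n = sPlus f m n := by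
  obtain ⟨⟨hcontact, hsp, -⟩, D, E, hface, hconst⟩ := hf
  refine IsSig21.eq_of_le_isotropic (hface m n).1.1 (hcontact (m + 1, n)).2
    (hsp (m + 1) n) (hsp m n) ?_ (hface m n).2.1 inf_le_left inf_le_right
  rw [(hconst m (m + 1) n).1]
  exact (hface (m + 1) n).2.1

lemma sPlus_eq_sPlus_zero (hf : IsChannelPlus f) (m n : ℤ) : sPlus f m n = sPlus f 0 n := by
  induction m using Int.induction_on with
  | zero => rfl
  | succ i ih => rw [hf.sPlus_succ, ih]
  | pred i ih => rw [← ih, ← hf.sPlus_succ (-(i : ℤ) - 1), sub_add_cancel]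

end IsChannelPlus

/-- A discrete channel surface envelopes a one-parameter family of spheres. -/
theorem channel_surface_envelopes_sphere_family
    (f : ℤ × ℤ → Submodule ℝ V6) (hf : IsChannelPlus f) :
    ∃ s : ℤ → Submodule ℝ V6, (∀ n : ℤ, IsSphere (s n)) ∧
      ∀ m n : ℤ, s n ≤ f (m, n) := by
  refine ⟨sPlus f 0, fun n => ⟨hf.1.2.1 0 n, fun x hx => (hf.1.1 (0, n)).2 x hx.1 x hx.1⟩,
    fun m n => ?_⟩
  rw [← hf.sPlus_eq_sPlus_zero m n]
  exact inf_le_left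
end
end

section
/- Let f : ℤ² → {contact elements} be a discrete channel surface with circular direction '+' such that for every n ∈ ℤ the subspace span{s⁻(m,n) : m ∈ ℤ} is 3-dimensional. Then the Lie cyclide congruence of f is unique: if (D⁺, D⁻) and (E⁺, E⁻) are two face-cyclide congruences for f that are both independent of m, then D⁺(m,n) = E⁺(m,n) and D⁻(m,n) = E⁻(m,n) for all faces (m,n). -/
/-!
Along the ribbon `n`, an `m`-independent cyclide congruence has one `(2,1)`-plane `E⁻` containing
every vertical curvature sphere `s⁻(m, n)`; these span a 3-dimensional space, so `E⁻` is that span.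
The other half `D⁺` is then forced as the orthogonal complement of `E⁻`, the form being
nondegenerate.
-/

noncomputable section

def Bf : LinearMap.BilinForm ℝ V6 :=
  LinearMap.mk₂ ℝ B
    (by intro x x' y; simp only [B, Pi.add_apply]; ring)
    (by intro c x y; simp only [B, Pi.smul_apply, smul_eq_mul]; ring)
    (by intro x y y'; simp only [B, Pi.add_apply]; ring)
    (by intro c x y; simp only [B, Pi.smul_apply, smul_eq_mul]; ring)

@[simp] lemma Bf_apply (x y : V6) : Bf x y = B x y := rfl

lemma Bf_isRefl : Bf.IsRefl := fun x y h => by rwa [Bf_apply, B_comm] at h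

lemma Bf_nondegenerate : Bf.Nondegenerate := by
  refine (LinearMap.IsRefl.nondegenerate_iff_separatingLeft Bf_isRefl).2 fun x hx => ?_
  funext i
  have h0 := hx (Pi.single 0 1)
  have h1 := hx (Pi.single 1 1)
  have h2 := hx (Pi.single 2 1)
  have h3 := hx (Pi.single 3 1)
  have h4 := hx (Pi.single 4 1)
  have h5 := hx (Pi.single 5 1)
  simp [B] at h0 h1 h2 h3 h4 h5
  fin_cases i <;> simp_all

lemma IsSig21.finrank_eq_three {D : Submodule ℝ V6} (h : IsSig21 D) :
    Module.finrank ℝ D = 3 := by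
  obtain ⟨u, v, w, rfl, huu, hvv, hww, huv, huw, hvw⟩ := h
  have hortho : Bf.iIsOrtho ![u, v, w] := by
    rw [LinearMap.BilinForm.iIsOrtho_def]
    intro i j hij
    fin_cases i <;> fin_cases j <;> simp_all [B_comm v u, B_comm w u, B_comm w v]
  have hli : LinearIndependent ℝ ![u, v, w] :=
    LinearMap.BilinForm.linearIndependent_of_iIsOrtho hortho fun i => by
      fin_cases i <;> simp [huu, hvv, hww]
  have hrange : Set.range ![u, v, w] = {u, v, w} := by
    rw [Matrix.range_cons, Matrix.range_cons, Matrix.range_cons, Matrix.range_empty]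
    simp only [Set.union_empty, Set.singleton_union]
  rw [← hrange, finrank_span_eq_card hli, Fintype.card_fin]

lemma IsDupin.eq_orthogonal {D E : Submodule ℝ V6} (h : IsDupin D E) :
    D = Bf.orthogonal E := by
  obtain ⟨hD, hE, hperp⟩ := h
  refine Submodule.eq_of_le_of_finrank_eq (fun y hy => ?_) ?_
  · rw [LinearMap.BilinForm.mem_orthogonal_iff]
    exact fun x hx => (hperp x).1 hx y hy
  · rw [LinearMap.BilinForm.finrank_orthogonal Bf_nondegenerate, hD.finrank_eq_three,
      hE.finrank_eq_three, Module.finrank_fin_fun]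

lemma IsFaceCyclideCongruence.eq_iSup_sMinus {f D E : ℤ × ℤ → Submodule ℝ V6}
    (hDE : IsFaceCyclideCongruence f D E) (hconst : ∀ m m' n : ℤ, E (m, n) = E (m', n))
    {n : ℤ} (hdim : Module.finrank ℝ ↥(⨆ m : ℤ, sMinus f m n) = 3) (m : ℤ) :
    E (m, n) = ⨆ m' : ℤ, sMinus f m' n := by
  have hle : (⨆ m' : ℤ, sMinus f m' n) ≤ E (m, n) :=
    iSup_le fun m' => hconst m m' n ▸ (hDE m' n).2.2.2.1
  refine (Submodule.eq_of_le_of_finrank_eq hle ?_).symm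
  rw [hdim, (hDE m n).1.2.1.finrank_eq_three]

theorem lie_cyclide_congruence_unique_general
    (f : ℤ × ℤ → Submodule ℝ V6)
    (hdim : ∀ n : ℤ, Module.finrank ℝ ↥(⨆ m : ℤ, sMinus f m n) = 3)
    (D E D' E' : ℤ × ℤ → Submodule ℝ V6)
    (hDE : IsFaceCyclideCongruence f D E)
    (hDE' : IsFaceCyclideCongruence f D' E')
    (hconst : ∀ m m' n : ℤ, D (m, n) = D (m', n) ∧ E (m, n) = E (m', n))
    (hconst' : ∀ m m' n : ℤ, D' (m, n) = D' (m', n) ∧ E' (m, n) = E' (m', n)) :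
    ∀ m n : ℤ, D (m, n) = D' (m, n) ∧ E (m, n) = E' (m, n) := by
  intro m n
  have hE : E (m, n) = E' (m, n) := by
    rw [hDE.eq_iSup_sMinus (fun m m' n => (hconst m m' n).2) (hdim n),
      hDE'.eq_iSup_sMinus (fun m m' n => (hconst' m m' n).2) (hdim n)]
  refine ⟨?_, hE⟩
  rw [(hDE m n).1.eq_orthogonal, (hDE' m n).1.eq_orthogonal, hE]

/-- The Lie cyclide congruence of a discrete channel surface (whose vertical
curvature spheres span 3-dimensional subspaces along each `+`-coordinate ribbon) is unique. -/
theorem lie_cyclide_congruence_unique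
    (f : ℤ × ℤ → Submodule ℝ V6) (hf : IsChannelPlus f)
    (hdim : ∀ n : ℤ, Module.finrank ℝ ↥(⨆ m : ℤ, sMinus f m n) = 3)
    (D E D' E' : ℤ × ℤ → Submodule ℝ V6)
    (hDE : IsFaceCyclideCongruence f D E)
    (hDE' : IsFaceCyclideCongruence f D' E')
    (hconst : ∀ m m' n : ℤ, D (m, n) = D (m', n) ∧ E (m, n) = E (m', n))
    (hconst' : ∀ m m' n : ℤ, D' (m, n) = D' (m', n) ∧ E' (m, n) = E' (m', n)) :
    ∀ m n : ℤ, D (m, n) = D' (m, n) ∧ E (m, n) = E' (m, n) :=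
  lie_cyclide_congruence_unique_general f hdim D E D' E' hDE hDE' hconst hconst'
end
end

section
/- Let f : ℤ² → {contact elements} be a nondegenerate discrete channel surface with circular direction '+' and let p ∈ V with ⟨p,p⟩ < 0. Then for all m, m', n ∈ ℤ the four point spheres of f(m,n), f(m',n), f(m',n+1) and f(m,n+1) lie in a common subspace of V of dimension at most 3. (Any two pairs of corresponding vertices on two adjacent circular curvature lines are concircular; in particular, any two discrete curvature lines in the non-circular direction of a discrete channel surface form a Ribaucour pair, and every '+'-coordinate ribbon is multi-circular.) -/
noncomputable section

/-- `f` is nondegenerate: every contact element of `f` is spanned by a horizontal and a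
vertical curvature sphere. -/
def Nondeg (f : ℤ × ℤ → Submodule ℝ V6) : Prop :=
  ∀ m n : ℤ, sPlus f m n ≠ sMinus f m n ∧ sPlus f m (n + 1) ≠ sMinus f m n

/-!
Along the circular direction the horizontal curvature spheres are constant: on the row of faces
`(k, n)` the cyclide `D(n)` meets the contact element `f(k+1,n) = s⁺(k+1,n) ⊕ s⁻(k+1,n)` exactly in
`s⁺(k+1,n)`, because `s⁻(k+1,n) ⊆ D(n)^⊥` and `D(n) ∩ D(n)^⊥ = 0`; hence `s⁺(k,n) = s⁺(k+1,n)`.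
Consequently `f(m',n)` and `f(m,n+1)` lie in the space `f(m,n) + f(m',n+1)` of dimension at most
four. Since `p^⊥` has signature `(4,1)` it contains no contact element, so this space meets `p^⊥` in
dimension at most three, and that intersection contains all four point spheres.
-/

theorem sup_inf_eq_left_of_disjoint {α : Type*} [Lattice α] [OrderBot α] [IsModularLattice α]
    {a c d e : α} (had : a ≤ d) (hce : c ≤ e) (hde : Disjoint d e) : (a ⊔ c) ⊓ d = a := by
  rw [sup_inf_assoc_of_le c had, (hde.symm.mono_left hce).eq_bot, sup_bot_eq]

theorem Submodule.sup_eq_of_finrank_eq_one {K V : Type*} [DivisionRing K] [AddCommGroup V]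
    [Module K V] {A C F : Submodule K V} (hF : Module.finrank K F = 2)
    (hA : Module.finrank K A = 1) (hC : Module.finrank K C = 1) (hAC : A ≠ C)
    (hAF : A ≤ F) (hCF : C ≤ F) : A ⊔ C = F := by
  have : FiniteDimensional K A := Module.finite_of_finrank_eq_succ hA
  have : FiniteDimensional K F := Module.finite_of_finrank_eq_succ hF
  have : FiniteDimensional K ↥(A ⊔ C) := Submodule.finiteDimensional_of_le (sup_le hAF hCF)
  have hlt : A < A ⊔ C := by
    refine lt_of_le_of_ne le_sup_left fun h => hAC (Submodule.eq_of_le_of_finrank_eq ?_ ?_).symm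
    · exact h ▸ le_sup_right
    · rw [hA, hC]
  have := Submodule.finrank_lt_finrank_of_lt hlt
  exact Submodule.eq_of_le_of_finrank_le (sup_le hAF hCF) (by omega)

theorem IsDupin.disjoint {D E : Submodule ℝ V6} (h : IsDupin D E) : Disjoint D E := by
  obtain ⟨⟨u, v, w, rfl, huu, hvv, hww, huv, huw, hvw⟩, -, hE⟩ := h
  rw [Submodule.disjoint_def]
  intro x hxD hxE
  obtain ⟨a, b, c, rfl⟩ := Submodule.mem_span_triple.1 hxD
  have hx := (hE _).1 hxE
  have hu := hx u (Submodule.subset_span (by simp))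
  have hv := hx v (Submodule.subset_span (by simp))
  have hw := hx w (Submodule.subset_span (by simp))
  simp only [B, Pi.add_apply, Pi.smul_apply, smul_eq_mul] at hu hv hw huu hvv hww huv huw hvw
  have ha : a = 0 := by linear_combination hu - a * huu - b * huv - c * huw
  have hb : b = 0 := by linear_combination hv - a * huv - b * hvv - c * hvw
  have hc : c = 0 := by linear_combination -hw + a * huw + b * hvw + c * hww
  simp [ha, hb, hc]

/-- The form is positive definite on the 4-dimensional subspace `x 4 = x 5 = 0`, so a subspace
on which it is negative semidefinite projects injectively to the last two coordinates. -/
theorem finrank_le_two_of_B_self_nonpos (S : Submodule ℝ V6) (hS : ∀ z ∈ S, B z z ≤ 0) :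
    Module.finrank ℝ S ≤ 2 := by
  let π : V6 →ₗ[ℝ] Fin 2 → ℝ := LinearMap.funLeft ℝ ℝ ![4, 5]
  have hinj : Function.Injective (π ∘ₗ S.subtype) := by
    rw [← LinearMap.ker_eq_bot, LinearMap.ker_eq_bot']
    intro z hz
    have h4 : (z : V6) 4 = 0 := congrFun hz 0
    have h5 : (z : V6) 5 = 0 := congrFun hz 1
    have hzz := hS z z.2
    simp only [B, h4, h5] at hzz
    ext i
    fin_cases i <;> simp <;> nlinarith [sq_nonneg ((z : V6) 0), sq_nonneg ((z : V6) 1),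
      sq_nonneg ((z : V6) 2), sq_nonneg ((z : V6) 3)]
  simpa using LinearMap.finrank_le_finrank_of_injective hinj

theorem IsContact.not_le_pPerp {W : Submodule ℝ V6} (hW : IsContact W) {p : V6}
    (hp : B p p < 0) : ¬ W ≤ pPerp p := by
  intro hWp
  have hp0 : p ≠ 0 := by
    rintro rfl
    simp [B] at hp
  have hpW : p ∉ W := fun h => hp.ne (hW.2 p h p h)
  have hdisj : W ⊓ ℝ ∙ p = ⊥ := ((Submodule.disjoint_span_singleton' hp0).2 hpW).eq_bot
  have hrank : Module.finrank ℝ ↥(W ⊔ ℝ ∙ p) = 3 := by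
    have := Submodule.finrank_sup_add_finrank_inf_eq W (ℝ ∙ p)
    rw [hdisj, finrank_bot, hW.1, finrank_span_singleton hp0] at this
    omega
  suffices Module.finrank ℝ ↥(W ⊔ ℝ ∙ p) ≤ 2 by omega
  refine finrank_le_two_of_B_self_nonpos _ fun z hz => ?_
  obtain ⟨w, hw, y, hy, rfl⟩ := Submodule.mem_sup.1 hz
  obtain ⟨c, rfl⟩ := Submodule.mem_span_singleton.1 hy
  have hww := hW.2 w hw w hw
  have hwp : B w p = 0 := hWp hw
  have : B (w + c • p) (w + c • p) = c ^ 2 * B p p := by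
    simp only [B, Pi.add_apply, Pi.smul_apply, smul_eq_mul] at hww hwp ⊢
    linear_combination hww + 2 * c * hwp
  rw [this]
  exact mul_nonpos_of_nonneg_of_nonpos (sq_nonneg c) hp.le

section ChannelSurface

variable {f : ℤ × ℤ → Submodule ℝ V6}

theorem Nondeg.sPlus_sup_sMinus (hnd : Nondeg f) (hf : IsLegendre f) (m n : ℤ) :
    sPlus f m n ⊔ sMinus f m n = f (m, n) :=
  Submodule.sup_eq_of_finrank_eq_one (hf.1 _).1 (hf.2.1 m n) (hf.2.2 m n) (hnd m n).1
    inf_le_left inf_le_left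

theorem Nondeg.sPlus_succ_sup_sMinus (hnd : Nondeg f) (hf : IsLegendre f) (m n : ℤ) :
    sPlus f m (n + 1) ⊔ sMinus f m n = f (m, n + 1) :=
  Submodule.sup_eq_of_finrank_eq_one (hf.1 _).1 (hf.2.1 m (n + 1)) (hf.2.2 m n) (hnd m n).2
    inf_le_left inf_le_right

theorem IsChannelPlus.sPlus_eq (hf : IsChannelPlus f) (hnd : Nondeg f) (m m' n : ℤ) :
    sPlus f m n = sPlus f m' n := by
  obtain ⟨hleg, D, E, hcon, hconst⟩ := hf
  have hstep : Function.Periodic (fun k => sPlus f k n) 1 := by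
    intro k
    have hle : sPlus f k n ≤ sPlus f (k + 1) n :=
      calc sPlus f k n ≤ f (k + 1, n) ⊓ D (k + 1, n) :=
            le_inf inf_le_right ((hcon k n).2.1.trans (hconst k (k + 1) n).1.le)
        _ = sPlus f (k + 1) n := by
          rw [← hnd.sPlus_sup_sMinus hleg]
          exact sup_inf_eq_left_of_disjoint (hcon (k + 1) n).2.1
            ((hcon k n).2.2.2.2.trans (hconst k (k + 1) n).2.le) (hcon (k + 1) n).1.disjoint
    exact (Submodule.eq_of_le_of_finrank_eq hle (by rw [hleg.2.1, hleg.2.1])).symm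
  simpa using (hstep.int_mul (m' - m) m).symm

end ChannelSurface

/-- For a nondegenerate discrete channel surface with circular direction `+`
and a point sphere complex `p`, any two pairs of corresponding vertices on two adjacent
circular curvature lines are concircular: the four point spheres of `f(m,n)`, `f(m',n)`,
`f(m',n+1)`, `f(m,n+1)` lie in a common subspace of dimension at most 3. -/
theorem adjacent_circular_lines_concircular
    (f : ℤ × ℤ → Submodule ℝ V6) (hf : IsChannelPlus f) (hnd : Nondeg f)
    (p : V6) (hp : B p p < 0) :
    ∀ m m' n : ℤ, ∃ W : Submodule ℝ V6, Module.finrank ℝ W ≤ 3 ∧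
      f (m, n) ⊓ pPerp p ≤ W ∧ f (m', n) ⊓ pPerp p ≤ W ∧
      f (m', n + 1) ⊓ pPerp p ≤ W ∧ f (m, n + 1) ⊓ pPerp p ≤ W := by
  intro m m' n
  have hleg := hf.1
  set U := f (m, n) ⊔ f (m', n + 1)
  have hm'n : f (m', n) ≤ U := by
    rw [← hnd.sPlus_sup_sMinus hleg, hf.sPlus_eq hnd m' m n]
    exact sup_le_sup inf_le_left inf_le_right
  have hmn' : f (m, n + 1) ≤ U := by
    rw [← hnd.sPlus_succ_sup_sMinus hleg, hf.sPlus_eq hnd m m' (n + 1)]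
    exact sup_le (le_sup_of_le_right inf_le_left) (le_sup_of_le_left inf_le_left)
  have hU : Module.finrank ℝ U ≤ 4 := by
    have := Submodule.finrank_add_le_finrank_add_finrank (f (m, n)) (f (m', n + 1))
    rwa [(hleg.1 _).1, (hleg.1 _).1] at this
  have hlt : Module.finrank ℝ ↥(U ⊓ pPerp p) < Module.finrank ℝ U :=
    Submodule.finrank_lt_finrank_of_lt
      (inf_lt_left.2 fun h => (hleg.1 (m, n)).not_le_pPerp hp (le_sup_left.trans h))
  exact ⟨U ⊓ pPerp p, by omega, inf_le_inf_right _ le_sup_left, inf_le_inf_right _ hm'n,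
    inf_le_inf_right _ le_sup_right, inf_le_inf_right _ hmn'⟩
end
end

section
/- Let S be a sphere in ℝ³ and let c₁, c₂ be two disjoint circles contained in S. Then either there exists a sphere Σ orthogonal to S, whose center lies on neither circle, such that inversion in Σ maps c₁ bijectively onto c₂, or there exists a plane P through the center of S such that the reflection in P maps c₁ onto c₂. (For any two adjacent generating circles of a discrete channel surface, which are cospherical, there exists a sphere orthogonal to the face-sphere for which inversion interchanges the two generating circles: a 'face-quer-sphere'.) -/
/-!
Write each circle as the slice `⟪nᵢ, x - o⟫ = δᵢ` of `S = sphere o R`, with `‖nᵢ‖ = 1` and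
`δᵢ² < R²`. A circle on `S` cut from `sphere a ρ` by a plane also lies in the radical plane of
the two spheres; a circle spans only one plane, so `a - o` is normal to it.

If `δ₁² = δ₂²`, replacing `n₂` by `-n₂` if necessary gives `δ₂ = δ₁`, and the reflection
exchanging `n₁` and `n₂` exchanges the two slices. Otherwise we invert in a sphere orthogonal to
`S`, with centre `q` and radius `r`, `‖q - o‖² = r² + R²`. It multiplies the power
`‖x - o‖² - R²` by `(r / ‖x - q‖)²`, so it preserves `S`. For `q = o + s • n₁ + u • n₂` it maps
the first slice into the second plane when `s δ₁ + u δ₂ = R²` and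
`r² = 2 u (⟪n₂, q - o⟫ - δ₂)`, and the second into the first when also
`r² = 2 s (⟪n₁, q - o⟫ - δ₁)`. Because `δ₁² ≠ δ₂²` these equations have a solution with
`r² > 0`: a centre of similitude of the two circles.
-/

open RealInnerProductSpace

noncomputable section

abbrev E3 : Type := EuclideanSpace ℝ (Fin 3)

/-- A circle in `ℝ³`: the intersection of a sphere with a plane, provided this
intersection contains more than one point. -/
def IsCircle (c : Set E3) : Prop :=
  ∃ (a : E3) (r : ℝ) (u : E3) (d : ℝ), 0 < r ∧ u ≠ 0 ∧
    c = Metric.sphere a r ∩ {x : E3 | ⟪u, x⟫ = d} ∧ c.Nontrivial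

open Metric EuclideanGeometry

section

variable {V : Type*} [NormedAddCommGroup V] [InnerProductSpace ℝ V]

def sphereSlice (o : V) (R : ℝ) (n : V) (δ : ℝ) : Set V :=
  sphere o R ∩ {x | ⟪n, x - o⟫ = δ}

theorem exists_eq_smul_of_inner_chord_eq_zero {a u v : V} {ρ d : ℝ} (hu : u ≠ 0)
    (hC : (sphere a ρ ∩ {x | ⟪u, x⟫ = d}).Nontrivial)
    (hv : ∀ x ∈ sphere a ρ ∩ {x | ⟪u, x⟫ = d}, ∀ y ∈ sphere a ρ ∩ {x | ⟪u, x⟫ = d},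
      ⟪v, x - y⟫ = 0) :
    ∃ μ : ℝ, v = μ • u := by
  have huu : ⟪u, u⟫ ≠ 0 := (inner_self_ne_zero (𝕜 := ℝ)).2 hu
  set m := a + ((d - ⟪u, a⟫) / ⟪u, u⟫) • u with hm_def
  have hm : ⟪u, m⟫ = d := by
    rw [hm_def, inner_add_right, inner_smul_right]; field_simp; ring
  have hma : ∀ y, ⟪u, y⟫ = d → ‖y - a‖ ^ 2 = ‖y - m‖ ^ 2 + ‖m - a‖ ^ 2 := by
    intro y hy
    have hperp : ⟪m - a, y - m⟫ = 0 := by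
      rw [hm_def, add_sub_cancel_left, ← hm_def, real_inner_smul_left, inner_sub_right, hy, hm,
        sub_self, mul_zero]
    rw [← sub_add_sub_cancel y m a, norm_add_sq_real, real_inner_comm (m - a), hperp]
    ring
  obtain ⟨x₀, hx₀, hx₀m⟩ := hC.exists_ne m
  set w := v - (⟪v, u⟫ / ⟪u, u⟫) • u with hw_def
  have huw : ⟪u, w⟫ = 0 := by
    rw [hw_def, inner_sub_right, inner_smul_right, real_inner_comm u v]; field_simp; ring
  suffices hww : ⟪w, w⟫ = 0 from ⟨_, sub_eq_zero.1 ((inner_self_eq_zero (𝕜 := ℝ)).1 hww)⟩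
  by_contra hww
  have hw : w ≠ 0 := fun h => hww (by rw [h, inner_zero_left])
  -- `m` is the centre of the circle, so `m ± τ • w` are the ends of a diameter along `w`
  set τ := ‖x₀ - m‖ / ‖w‖
  have hτ : 0 < τ := div_pos (norm_pos_iff.2 (sub_ne_zero.2 hx₀m)) (norm_pos_iff.2 hw)
  have hmem : ∀ t : ℝ, t ^ 2 = τ ^ 2 → m + t • w ∈ sphere a ρ ∩ {x | ⟪u, x⟫ = d} := by
    intro t ht
    have hd : ⟪u, m + t • w⟫ = d := by rw [inner_add_right, inner_smul_right, huw, hm]; ring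
    refine ⟨?_, hd⟩
    rw [Metric.mem_sphere, dist_eq_norm, ← hx₀.1, dist_eq_norm]
    refine (pow_left_inj₀ (norm_nonneg _) (norm_nonneg _) two_ne_zero).1 ?_
    rw [hma _ hd, hma _ hx₀.2, add_sub_cancel_left, norm_smul, mul_pow, Real.norm_eq_abs, sq_abs,
      ht, div_pow, div_mul_cancel₀ _ (pow_ne_zero 2 (norm_ne_zero_iff.2 hw))]
  have hchord := hv _ (hmem τ rfl) _ (hmem (-τ) (neg_sq τ))
  have hvw : ⟪v, w⟫ = ⟪w, w⟫ := by
    rw [show v = w + (⟪v, u⟫ / ⟪u, u⟫) • u by rw [hw_def, sub_add_cancel], inner_add_left,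
      real_inner_smul_left, real_inner_comm u, huw, mul_zero, add_zero]
  rw [add_sub_add_left_eq_sub, ← sub_smul, inner_smul_right, hvw] at hchord
  exact hww (by nlinarith)

theorem sphere_inter_hyperplane_eq_of_subset {a o u : V} {ρ R d : ℝ} (hu : u ≠ 0)
    (hC : (sphere a ρ ∩ {x | ⟪u, x⟫ = d}).Nontrivial)
    (hsub : sphere a ρ ∩ {x | ⟪u, x⟫ = d} ⊆ sphere o R) :
    sphere a ρ ∩ {x | ⟪u, x⟫ = d} = sphere o R ∩ {x | ⟪u, x⟫ = d} := by
  have hdist : ∀ x ∈ sphere o R, ‖x - a‖ ^ 2 = R ^ 2 - 2 * ⟪a - o, x - o⟫ + ‖a - o‖ ^ 2 := by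
    intro x hx
    rw [← Metric.mem_sphere.1 hx, dist_eq_norm, ← real_inner_comm (a - o), ← norm_sub_sq_real,
      sub_sub_sub_cancel_right]
  -- the circle lies in the radical plane of the two spheres
  have hrad : ∀ x ∈ sphere a ρ ∩ {x | ⟪u, x⟫ = d},
      2 * ⟪a - o, x - o⟫ = R ^ 2 + ‖a - o‖ ^ 2 - ρ ^ 2 := by
    intro x hx
    have := hdist x (hsub hx)
    rw [← dist_eq_norm, Metric.mem_sphere.1 hx.1] at this
    linarith
  obtain ⟨μ, hμ⟩ := exists_eq_smul_of_inner_chord_eq_zero hu hC fun x hx y hy => by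
    have := (hrad x hx).trans (hrad y hy).symm
    rw [← sub_sub_sub_cancel_right x y o, inner_sub_right]
    linarith
  obtain ⟨x₀, hx₀⟩ := hC.nonempty
  refine subset_antisymm (fun x hx => ⟨hsub hx, hx.2⟩) fun x ⟨hx, hxd⟩ => ⟨?_, hxd⟩
  have hx₀d : ⟪a - o, x₀ - o⟫ = ⟪a - o, x - o⟫ := by
    rw [hμ, inner_smul_left, inner_smul_left, inner_sub_right, inner_sub_right, hx₀.2, hxd.out]
  rw [Metric.mem_sphere, dist_eq_norm, ← Metric.mem_sphere.1 hx₀.1, dist_eq_norm]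
  refine (pow_left_inj₀ (norm_nonneg _) (norm_nonneg _) two_ne_zero).1 ?_
  rw [hdist x hx, hdist x₀ (hsub hx₀), hx₀d]

theorem sphere_inter_hyperplane_eq_sphereSlice (o : V) (R : ℝ) {u : V} (hu : u ≠ 0) (d : ℝ) :
    sphere o R ∩ {x | ⟪u, x⟫ = d} = sphereSlice o R (‖u‖⁻¹ • u) ((d - ⟪u, o⟫) / ‖u‖) := by
  have hu' : ‖u‖ ≠ 0 := norm_ne_zero_iff.2 hu
  ext x
  simp only [sphereSlice, Set.mem_inter_iff, Set.mem_ofPred_eq, real_inner_smul_left,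
    inner_sub_right]
  constructor
  · rintro ⟨hx, hxd⟩; exact ⟨hx, by rw [hxd]; field_simp⟩
  · rintro ⟨hx, hxd⟩; refine ⟨hx, ?_⟩; field_simp at hxd; linarith

theorem sq_lt_sq_of_sphereSlice_nontrivial {o n : V} {R δ : ℝ} (hn : ‖n‖ = 1)
    (h : (sphereSlice o R n δ).Nontrivial) : δ ^ 2 < R ^ 2 := by
  by_contra! hle
  refine Set.not_nontrivial_iff.2 (fun x hx y hy => ?_) h
  have hfoot : ∀ z ∈ sphereSlice o R n δ, z = o + δ • n := by
    rintro z ⟨hz, hzn⟩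
    have hsq : ‖(z - o) - δ • n‖ ^ 2 = R ^ 2 - δ ^ 2 := by
      rw [norm_sub_sq_real, ← dist_eq_norm, Metric.mem_sphere.1 hz, inner_smul_right,
        real_inner_comm, hzn.out, norm_smul, hn, Real.norm_eq_abs, mul_one, sq_abs]
      ring
    have : ‖(z - o) - δ • n‖ = 0 := by nlinarith [norm_nonneg ((z - o) - δ • n)]
    rw [norm_eq_zero, sub_sub, sub_eq_zero] at this
    exact this
  rw [hfoot x hx, hfoot y hy]

theorem sphereSlice_neg (o : V) (R : ℝ) (n : V) (δ : ℝ) :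
    sphereSlice o R (-n) (-δ) = sphereSlice o R n δ := by
  ext x
  simp only [sphereSlice, Set.mem_inter_iff, Set.mem_ofPred_eq, inner_neg_left, neg_inj]

theorem reflection_orthogonalComplement_singleton_apply (w y : V) :
    (ℝ ∙ w)ᗮ.reflection y = y - (2 * ⟪w, y⟫ / ⟪w, w⟫) • w := by
  rw [Submodule.reflection_orthogonal_apply, Submodule.reflection_singleton_apply,
    real_inner_self_eq_norm_sq]
  simp only [RCLike.ofReal_real_eq_id, id, two_smul, neg_sub]
  module

theorem image_reflection_sphereSlice {o n₁ n₂ : V} (hn : ‖n₁‖ = ‖n₂‖) (R δ : ℝ) :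
    (fun x : V => x - (2 * ⟪n₁ - n₂, x - o⟫ / ⟪n₁ - n₂, n₁ - n₂⟫) • (n₁ - n₂)) ''
      sphereSlice o R n₁ δ = sphereSlice o R n₂ δ := by
  set ρ := (ℝ ∙ (n₁ - n₂))ᗮ.reflection
  have hρ : (fun x : V => x - (2 * ⟪n₁ - n₂, x - o⟫ / ⟪n₁ - n₂, n₁ - n₂⟫) • (n₁ - n₂)) =
      fun x => o + ρ (x - o) := by
    funext x
    rw [reflection_orthogonalComplement_singleton_apply]
    abel
  have hρρ : ∀ y, ρ (ρ y) = y := Submodule.reflection_reflection _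
  have hinv : Function.Involutive fun x => o + ρ (x - o) := fun x => by
    simp only [add_sub_cancel_left, hρρ, add_sub_cancel]
  have hn₁ : ρ n₁ = n₂ := Submodule.reflection_sub hn
  rw [hρ, hinv.image_eq_preimage_symm]
  ext x
  simp only [sphereSlice, Set.mem_preimage, Set.mem_inter_iff, Metric.mem_sphere, dist_eq_norm,
    Set.mem_ofPred_eq, add_sub_cancel_left, LinearIsometryEquiv.norm_map]
  rw [← ρ.inner_map_map n₁, hρρ, hn₁]

theorem inversion_sub_eq (q o x : V) (r : ℝ) :
    inversion q r x - o = (r / dist x q) ^ 2 • (x - q) + (q - o) := by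
  rw [← sub_add_sub_cancel (inversion q r x) q o, ← vsub_eq_sub, inversion_vsub_center,
    vsub_eq_sub]

theorem dist_inversion_sq_sub_sq {q o x : V} {r R : ℝ} (hq : dist q o ^ 2 = r ^ 2 + R ^ 2)
    (hx : x ≠ q) :
    dist (inversion q r x) o ^ 2 - R ^ 2 = (r / dist x q) ^ 2 * (dist x o ^ 2 - R ^ 2) := by
  have hl : (r / dist x q) ^ 2 * ‖x - q‖ ^ 2 = r ^ 2 := by
    rw [← dist_eq_norm, div_pow, div_mul_cancel₀ _ (pow_ne_zero 2 (dist_ne_zero.2 hx))]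
  set l := (r / dist x q) ^ 2
  have hxo : ‖x - o‖ ^ 2 = ‖x - q‖ ^ 2 + 2 * ⟪x - q, q - o⟫ + ‖q - o‖ ^ 2 := by
    rw [← norm_add_sq_real, sub_add_sub_cancel]
  rw [dist_eq_norm] at hq
  rw [dist_eq_norm, dist_eq_norm, inversion_sub_eq, norm_add_sq_real, norm_smul, mul_pow,
    Real.norm_eq_abs, sq_abs, real_inner_smul_left, hxo, hq]
  linear_combination (l - 1) * hl

theorem ne_of_mem_sphere_of_dist_sq_eq {P : Type*} [MetricSpace P] {q o x : P} {r R : ℝ}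
    (hq : dist q o ^ 2 = r ^ 2 + R ^ 2) (hr : r ≠ 0) (hx : x ∈ sphere o R) : x ≠ q := by
  rintro rfl
  rw [Metric.mem_sphere.1 hx] at hq
  exact hr (pow_eq_zero_iff two_ne_zero |>.1 (by linarith))

theorem mapsTo_inversion_sphere {q o : V} {r R : ℝ} (hq : dist q o ^ 2 = r ^ 2 + R ^ 2)
    (hr : r ≠ 0) : Set.MapsTo (inversion q r) (sphere o R) (sphere o R) := by
  intro x hx
  have := dist_inversion_sq_sub_sq hq (ne_of_mem_sphere_of_dist_sq_eq hq hr hx)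
  rw [Metric.mem_sphere.1 hx, sub_self, mul_zero, sub_eq_zero] at this
  rw [Metric.mem_sphere]
  exact (pow_left_inj₀ dist_nonneg (hx.symm ▸ dist_nonneg) two_ne_zero).1 this

theorem inner_inversion_sub_eq {o q x n₁ n₂ : V} {r R s u d₁ d₂ : ℝ}
    (hq : q - o = s • n₁ + u • n₂) (hpow : dist q o ^ 2 = r ^ 2 + R ^ 2)
    (hpole : s * d₁ + u * d₂ = R ^ 2) (hr : r ^ 2 = 2 * u * (⟪n₂, q - o⟫ - d₂))
    (hx : x ∈ sphereSlice o R n₁ d₁) (hxq : x ≠ q) :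
    ⟪n₂, inversion q r x - o⟫ = d₂ := by
  obtain ⟨hxR, hxd⟩ := hx
  have hN : ‖x - q‖ ^ 2 ≠ 0 := pow_ne_zero 2 (norm_ne_zero_iff.2 (sub_ne_zero.2 hxq))
  have hl : (r / dist x q) ^ 2 * ‖x - q‖ ^ 2 = r ^ 2 := by
    rw [← dist_eq_norm, div_pow, div_mul_cancel₀ _ (pow_ne_zero 2 (dist_ne_zero.2 hxq))]
  set l := (r / dist x q) ^ 2
  have hxq2 : ‖x - q‖ ^ 2 = r ^ 2 - 2 * u * (⟪n₂, x - o⟫ - d₂) := by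
    rw [← sub_sub_sub_cancel_right x q o, norm_sub_sq_real, ← dist_eq_norm, ← dist_eq_norm,
      Metric.mem_sphere.1 hxR, hpow, hq, inner_add_right, real_inner_smul_right,
      real_inner_smul_right, real_inner_comm, real_inner_comm n₂, hxd.out]
    linear_combination -2 * hpole
  have hn₂ : ⟪n₂, x - q⟫ = ⟪n₂, x - o⟫ - ⟪n₂, q - o⟫ := by
    rw [← inner_sub_right, sub_sub_sub_cancel_right]
  rw [inversion_sub_eq, inner_add_right, real_inner_smul_right, hn₂]
  refine mul_right_cancel₀ hN ?_
  linear_combination (⟪n₂, x - o⟫ - ⟪n₂, q - o⟫) * hl + (⟪n₂, q - o⟫ - d₂) * hxq2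
    + (⟪n₂, x - o⟫ - d₂) * hr

theorem exists_inversion_coeffs {R d₁ d₂ : ℝ} (k : ℝ) (h₁ : d₁ ^ 2 < R ^ 2)
    (h₂ : d₂ ^ 2 < R ^ 2) (hne : d₁ ^ 2 ≠ d₂ ^ 2) :
    ∃ s u : ℝ, s * d₁ + u * d₂ = R ^ 2 ∧ s * (s + k * u - d₁) = u * (k * s + u - d₂) ∧
      0 < s * (s + k * u - d₁) := by
  obtain ⟨σ, hσ, hσk⟩ : ∃ σ : ℝ, σ ^ 2 = 1 ∧ 0 ≤ σ * (k * R ^ 2 - d₁ * d₂) := by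
    rcases le_total 0 (k * R ^ 2 - d₁ * d₂) with h | h
    · exact ⟨1, by norm_num, by linarith⟩
    · exact ⟨-1, by norm_num, by linarith⟩
  set γ₁ := √(R ^ 2 - d₁ ^ 2)
  set γ₂ := √(R ^ 2 - d₂ ^ 2)
  have hγ₁ : γ₁ ^ 2 = R ^ 2 - d₁ ^ 2 := Real.sq_sqrt (by linarith)
  have hγ₂ : γ₂ ^ 2 = R ^ 2 - d₂ ^ 2 := Real.sq_sqrt (by linarith)
  have hγ₁0 : 0 < γ₁ := Real.sqrt_pos.2 (by linarith)
  have hγ₂0 : 0 < γ₂ := Real.sqrt_pos.2 (by linarith)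
  have hR : R ^ 2 ≠ 0 := by nlinarith
  set Δ := σ * d₁ * γ₂ + d₂ * γ₁
  have hΔ : Δ ≠ 0 := by
    have : Δ * (σ * d₁ * γ₂ - d₂ * γ₁) = R ^ 2 * (d₁ ^ 2 - d₂ ^ 2) := by
      linear_combination d₁ ^ 2 * hγ₂ - d₂ ^ 2 * hγ₁ + d₁ ^ 2 * γ₂ ^ 2 * hσ
    exact left_ne_zero_of_mul (this ▸ mul_ne_zero hR (sub_ne_zero.2 hne))
  -- `s : u = σ γ₂ : γ₁`, the ratio of the radii of the circles: a centre of similitude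
  refine ⟨σ * γ₂ * R ^ 2 / Δ, γ₁ * R ^ 2 / Δ, ?_, ?_, ?_⟩
  · field_simp
    ring
  · field_simp
    linear_combination γ₂ ^ 2 * R ^ 2 * (R ^ 2 - d₁ ^ 2) * hσ - γ₂ ^ 2 * R ^ 2 * hγ₁
      + R ^ 2 * γ₁ ^ 2 * hγ₂
  · have : σ * γ₂ * R ^ 2 / Δ * (σ * γ₂ * R ^ 2 / Δ + k * (γ₁ * R ^ 2 / Δ) - d₁) =
        γ₁ * γ₂ * R ^ 2 * (γ₁ * γ₂ + σ * (k * R ^ 2 - d₁ * d₂)) / Δ ^ 2 := by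
      field_simp
      linear_combination R ^ 2 * γ₂ * (R ^ 2 - d₁ ^ 2) * hσ - R ^ 2 * γ₂ * hγ₁
    rw [this]
    have : 0 < γ₁ * γ₂ + σ * (k * R ^ 2 - d₁ * d₂) := by positivity
    positivity

theorem mapsTo_inversion_sphereSlice {o q n₁ n₂ : V} {r R s u d₁ d₂ : ℝ} (hr0 : r ≠ 0)
    (hq : q - o = s • n₁ + u • n₂) (hpow : dist q o ^ 2 = r ^ 2 + R ^ 2)
    (hpole : s * d₁ + u * d₂ = R ^ 2) (hr : r ^ 2 = 2 * u * (⟪n₂, q - o⟫ - d₂)) :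
    Set.MapsTo (inversion q r) (sphereSlice o R n₁ d₁) (sphereSlice o R n₂ d₂) := fun _ hx =>
  ⟨mapsTo_inversion_sphere hpow hr0 hx.1,
    inner_inversion_sub_eq hq hpow hpole hr hx (ne_of_mem_sphere_of_dist_sq_eq hpow hr0 hx.1)⟩

theorem exists_inversion_swapping_sphereSlices {o n₁ n₂ : V} {R d₁ d₂ : ℝ} (hn₁ : ‖n₁‖ = 1)
    (hn₂ : ‖n₂‖ = 1) (h₁ : d₁ ^ 2 < R ^ 2) (h₂ : d₂ ^ 2 < R ^ 2) (hne : d₁ ^ 2 ≠ d₂ ^ 2) :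
    ∃ (q : V) (r : ℝ), 0 < r ∧ dist q o ^ 2 = r ^ 2 + R ^ 2 ∧
      Set.MapsTo (inversion q r) (sphereSlice o R n₁ d₁) (sphereSlice o R n₂ d₂) ∧
      Set.MapsTo (inversion q r) (sphereSlice o R n₂ d₂) (sphereSlice o R n₁ d₁) := by
  set k := ⟪n₁, n₂⟫
  obtain ⟨s, u, hpole, hsym, hpos⟩ := exists_inversion_coeffs k h₁ h₂ hne
  set r := √(2 * (s * (s + k * u - d₁)))
  have hr : r ^ 2 = 2 * (s * (s + k * u - d₁)) := Real.sq_sqrt (by positivity)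
  have hr0 : 0 < r := Real.sqrt_pos.2 (by positivity)
  set q := o + (s • n₁ + u • n₂)
  have hq : q - o = s • n₁ + u • n₂ := add_sub_cancel_left _ _
  have hqn₁ : ⟪n₁, q - o⟫ = s + k * u := by
    rw [hq, inner_add_right, real_inner_smul_right, real_inner_smul_right,
      real_inner_self_eq_norm_sq, hn₁]
    ring
  have hqn₂ : ⟪n₂, q - o⟫ = k * s + u := by
    rw [hq, inner_add_right, real_inner_smul_right, real_inner_smul_right,
      real_inner_self_eq_norm_sq, hn₂, real_inner_comm]
    ring
  have hpow : dist q o ^ 2 = r ^ 2 + R ^ 2 := by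
    rw [dist_eq_norm, ← real_inner_self_eq_norm_sq]
    nth_rewrite 1 [hq]
    rw [inner_add_left, real_inner_smul_left, real_inner_smul_left, hqn₁, hqn₂, hr]
    linear_combination -hsym + hpole
  refine ⟨q, r, hr0, hpow, mapsTo_inversion_sphereSlice hr0.ne' hq hpow hpole ?_,
    mapsTo_inversion_sphereSlice hr0.ne' (hq.trans (add_comm _ _)) hpow
      ((add_comm _ _).trans hpole) ?_⟩
  · rw [hr, hqn₂, hsym]; ring
  · rw [hr, hqn₁]; ring

end

theorem IsCircle.exists_eq_sphereSlice {c : Set E3} {o : E3} {R : ℝ} (hc : IsCircle c)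
    (hcS : c ⊆ sphere o R) :
    ∃ (n : E3) (δ : ℝ), ‖n‖ = 1 ∧ δ ^ 2 < R ^ 2 ∧ c = sphereSlice o R n δ := by
  obtain ⟨a, ρ, u, d, -, hu, rfl, hnt⟩ := hc
  have hC := sphere_inter_hyperplane_eq_of_subset hu hnt hcS
  have hn : ‖‖u‖⁻¹ • u‖ = 1 := by
    rw [norm_smul, norm_inv, norm_norm, inv_mul_cancel₀ (norm_ne_zero_iff.2 hu)]
  rw [hC, sphere_inter_hyperplane_eq_sphereSlice o R hu] at hnt ⊢
  exact ⟨_, _, hn, sq_lt_sq_of_sphereSlice_nontrivial hn hnt, rfl⟩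

theorem face_quer_sphere_exists_general
    (o : E3) (R : ℝ) (c₁ c₂ : Set E3)
    (h₁ : IsCircle c₁) (h₂ : IsCircle c₂)
    (h₁S : c₁ ⊆ Metric.sphere o R) (h₂S : c₂ ⊆ Metric.sphere o R)
    (hdisj : Disjoint c₁ c₂) :
    (∃ (q : E3) (r : ℝ), 0 < r ∧ dist q o ^ 2 = r ^ 2 + R ^ 2 ∧
      q ∉ c₁ ∧ q ∉ c₂ ∧ Set.BijOn (EuclideanGeometry.inversion q r) c₁ c₂) ∨
    (∃ u : E3, u ≠ 0 ∧
      (fun x : E3 => x - (2 * ⟪u, x - o⟫ / ⟪u, u⟫) • u) '' c₁ = c₂) := by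
  obtain ⟨x₁, hx₁⟩ : c₁.Nonempty := by obtain ⟨-, -, -, -, -, -, -, h⟩ := h₁; exact h.nonempty
  obtain ⟨n₁, δ₁, hn₁, hδ₁, rfl⟩ := h₁.exists_eq_sphereSlice h₁S
  obtain ⟨n₂, δ₂, hn₂, hδ₂, rfl⟩ := h₂.exists_eq_sphereSlice h₂S
  by_cases hδ : δ₁ ^ 2 = δ₂ ^ 2
  · right
    obtain ⟨n, hn, hc₂⟩ : ∃ n : E3, ‖n‖ = 1 ∧ sphereSlice o R n₂ δ₂ = sphereSlice o R n δ₁ := by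
      rcases sq_eq_sq_iff_eq_or_eq_neg.1 hδ with h | h
      · exact ⟨n₂, hn₂, by rw [h]⟩
      · exact ⟨-n₂, by rw [norm_neg, hn₂], by rw [h, sphereSlice_neg]⟩
    rw [hc₂] at hdisj ⊢
    refine ⟨n₁ - n, sub_ne_zero.2 ?_, image_reflection_sphereSlice (hn₁.trans hn.symm) R δ₁⟩
    rintro rfl
    exact Set.disjoint_left.1 hdisj hx₁ hx₁
  · left
    obtain ⟨q, r, hr, hq, h₁₂, h₂₁⟩ := exists_inversion_swapping_sphereSlices hn₁ hn₂ hδ₁ hδ₂ hδ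
    have hinv := inversion_involutive q hr.ne'
    refine ⟨q, r, hr, hq, fun h => ne_of_mem_sphere_of_dist_sq_eq hq hr.ne' (h₁S h) rfl,
      fun h => ne_of_mem_sphere_of_dist_sq_eq hq hr.ne' (h₂S h) rfl,
      Set.InvOn.bijOn ⟨fun x _ => hinv x, fun x _ => hinv x⟩ h₁₂ h₂₁⟩

/-- For two disjoint circles on a sphere `S` there is either a sphere
orthogonal to `S`, whose center lies on neither circle, such that the inversion in it maps
one circle bijectively onto the other, or a plane through the center of `S` such that the
reflection in it maps one circle onto the other (a face-quer-sphere). -/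
theorem face_quer_sphere_exists
    (o : E3) (R : ℝ) (hR : 0 < R) (c₁ c₂ : Set E3)
    (h₁ : IsCircle c₁) (h₂ : IsCircle c₂)
    (h₁S : c₁ ⊆ Metric.sphere o R) (h₂S : c₂ ⊆ Metric.sphere o R)
    (hdisj : Disjoint c₁ c₂) :
    (∃ (q : E3) (r : ℝ), 0 < r ∧ dist q o ^ 2 = r ^ 2 + R ^ 2 ∧
      q ∉ c₁ ∧ q ∉ c₂ ∧ Set.BijOn (EuclideanGeometry.inversion q r) c₁ c₂) ∨
    (∃ u : E3, u ≠ 0 ∧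
      (fun x : E3 => x - (2 * ⟪u, x - o⟫ / ⟪u, u⟫) • u) '' c₁ = c₂) :=
  face_quer_sphere_exists_general o R c₁ c₂ h₁ h₂ h₁S h₂S hdisj
end
end
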